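/- arXiv:2312.00676 — 3 statements merged into one kernel-verified Lean document; each statement's English description precedes it below -/
import Mathlib

section
/- Let F be a field and P ∈ F[λ]^{m×n} a polynomial matrix with normal rank r, 0 < r ≤ min{m,n}. Suppose M ∈ F[λ]^{(m−r)×m} is a matrix whose rows form a minimal basis of N_ℓ(P), L ∈ F[λ]^{m×r} is a matrix whose columns form a minimal basis of Col(P), N ∈ F[λ]^{n×(n−r)} is a matrix whose columns form a minimal basis of N_r(P), and R ∈ F[λ]^{r×n} is a matrix whose rows form a minimal basis of Row(P). Then the sum of the row degrees of M equals the sum of the column degrees of L, and the sum of the column degrees of N equals the sum of the row degrees of R. (Equivalently: the sum of the minimal indices of N_ℓ(P) equals the sum of the minimal indices of Col(P), and the sum of the minimal indices of N_r(P) equals the sum of the minimal indices of Row(P).) -/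
open Polynomial Matrix

noncomputable section

variable {F : Type*} [Field F]

/-- The matrix over the field of rational functions associated with a polynomial matrix. -/
def toRat {m n : ℕ} (P : Matrix (Fin m) (Fin n) F[X]) : Matrix (Fin m) (Fin n) (RatFunc F) :=
  P.map (algebraMap F[X] (RatFunc F))

/-- The normal rank of a polynomial matrix: its rank over the field of rational functions. -/
def normalRank {m n : ℕ} (P : Matrix (Fin m) (Fin n) F[X]) : ℕ := (toRat P).rank

/-- The degree of a polynomial matrix: the maximum of the degrees of its entries,
`⊥` (i.e. -∞) for the zero matrix. -/
def matDeg {m n : ℕ} (P : Matrix (Fin m) (Fin n) F[X]) : WithBot ℕ :=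
  Finset.univ.sup fun i : Fin m => Finset.univ.sup fun j : Fin n => (P i j).degree

/-- Degree of the i-th row. -/
def rowDeg {m n : ℕ} (P : Matrix (Fin m) (Fin n) F[X]) (i : Fin m) : WithBot ℕ :=
  Finset.univ.sup fun j : Fin n => (P i j).degree

/-- Degree of the j-th column. -/
def colDeg {m n : ℕ} (P : Matrix (Fin m) (Fin n) F[X]) (j : Fin n) : WithBot ℕ :=
  Finset.univ.sup fun i : Fin m => (P i j).degree

/-- Degree of the i-th row as a natural number (0 for a zero row). -/
def rowDegNat {m n : ℕ} (P : Matrix (Fin m) (Fin n) F[X]) (i : Fin m) : ℕ :=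
  Finset.univ.sup fun j : Fin n => (P i j).natDegree

/-- Degree of the j-th column as a natural number (0 for a zero column). -/
def colDegNat {m n : ℕ} (P : Matrix (Fin m) (Fin n) F[X]) (j : Fin n) : ℕ :=
  Finset.univ.sup fun i : Fin m => (P i j).natDegree

/-- Highest-row-degree coefficient matrix. -/
def hrMatrix {m n : ℕ} (P : Matrix (Fin m) (Fin n) F[X]) : Matrix (Fin m) (Fin n) F :=
  Matrix.of fun i j => (P i j).coeff (rowDegNat P i)

/-- Highest-column-degree coefficient matrix. -/
def hcMatrix {m n : ℕ} (P : Matrix (Fin m) (Fin n) F[X]) : Matrix (Fin m) (Fin n) F :=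
  Matrix.of fun i j => (P i j).coeff (colDegNat P j)

/-- A polynomial matrix is row reduced if its highest-row-degree coefficient matrix has
full row rank. -/
def RowReduced {m n : ℕ} (P : Matrix (Fin m) (Fin n) F[X]) : Prop := (hrMatrix P).rank = m

/-- A polynomial matrix is column reduced if its highest-column-degree coefficient matrix has
full column rank. -/
def ColReduced {m n : ℕ} (P : Matrix (Fin m) (Fin n) F[X]) : Prop := (hcMatrix P).rank = n

/-- Evaluation of a polynomial matrix at a point of the algebraic closure. -/
def evalMat {m n : ℕ} (P : Matrix (Fin m) (Fin n) F[X]) (x : AlgebraicClosure F) :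
    Matrix (Fin m) (Fin n) (AlgebraicClosure F) :=
  Matrix.of fun i j => aeval x (P i j)

/-- The rows of `P` form a minimal basis of the rational subspace they span (Forney's
characterization): full row rank at every point of the algebraic closure, and row reduced. -/
def IsMinimalRowBasis {m n : ℕ} (P : Matrix (Fin m) (Fin n) F[X]) : Prop :=
  (∀ x : AlgebraicClosure F, (evalMat P x).rank = m) ∧ RowReduced P

/-- The columns of `P` form a minimal basis of the rational subspace they span. -/
def IsMinimalColBasis {m n : ℕ} (P : Matrix (Fin m) (Fin n) F[X]) : Prop :=
  (∀ x : AlgebraicClosure F, (evalMat P x).rank = n) ∧ ColReduced P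

/-- The column space Col(P) over the field of rational functions. -/
def colSpace {m n : ℕ} (P : Matrix (Fin m) (Fin n) F[X]) :
    Submodule (RatFunc F) (Fin m → RatFunc F) :=
  LinearMap.range (toRat P).mulVecLin

/-- The row space Row(P) over the field of rational functions. -/
def rowSpace {m n : ℕ} (P : Matrix (Fin m) (Fin n) F[X]) :
    Submodule (RatFunc F) (Fin n → RatFunc F) :=
  LinearMap.range (toRat P)ᵀ.mulVecLin

/-- The right nullspace N_r(P). -/
def rightNull {m n : ℕ} (P : Matrix (Fin m) (Fin n) F[X]) :
    Submodule (RatFunc F) (Fin n → RatFunc F) :=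
  LinearMap.ker (toRat P).mulVecLin

/-- The left nullspace N_ℓ(P). -/
def leftNull {m n : ℕ} (P : Matrix (Fin m) (Fin n) F[X]) :
    Submodule (RatFunc F) (Fin m → RatFunc F) :=
  LinearMap.ker (toRat P)ᵀ.mulVecLin

/-! The rows of `M` and the columns of `L` are dual minimal bases: `M * L = 0` and their numbers
add up to `m`; likewise the rows of `R` and the columns of `N`. For such a pair, each maximal minor
of `M` times a fixed maximal minor of `Lᵀ` equals, up to sign, the fixed complementary minor of `M`
times the complementary minor of `Lᵀ`. Cancelling common factors and using that neither family of
minors has a common root in the algebraic closure, complementary minors have the same degree.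
Row reducedness makes the largest degree of a maximal minor the sum of the row degrees. -/

theorem Polynomial.coeff_prod_of_natDegree_le_sum {R ι : Type*} [CommSemiring R] (s : Finset ι)
    (f : ι → R[X]) (d : ι → ℕ) (h : ∀ i ∈ s, (f i).natDegree ≤ d i) :
    (∏ i ∈ s, f i).coeff (∑ i ∈ s, d i) = ∏ i ∈ s, (f i).coeff (d i) := by
  classical
  induction s using Finset.induction_on with
  | empty => simp
  | insert a s ha ih =>
    rw [Finset.forall_mem_insert] at h
    rw [Finset.prod_insert ha, Finset.sum_insert ha, Finset.prod_insert ha,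
      coeff_mul_add_eq_of_natDegree_le h.1
        ((natDegree_prod_le _ _).trans (Finset.sum_le_sum h.2)), ih h.2]

section AlgClosed

variable {K ι : Type*} [Field K] [IsAlgClosed K] [Algebra F K]

theorem Polynomial.isUnit_of_dvd_of_forall_exists_aeval_ne_zero {u : F[X]} {f : ι → F[X]}
    (hdvd : ∀ i, u ∣ f i) (hf : ∀ x : K, ∃ i, aeval x (f i) ≠ 0) : IsUnit u := by
  by_contra hu
  obtain ⟨x, hx⟩ := IsAlgClosed.exists_aeval_eq_zero K u (mt isUnit_iff_degree_eq_zero.2 hu)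
  obtain ⟨i, hi⟩ := hf x
  obtain ⟨c, hc⟩ := hdvd i
  simp [hc, hx] at hi

theorem Polynomial.degree_eq_degree_of_associated_mul_mul {α β : ι → F[X]}
    (hαβ : ∀ i j, Associated (α i * β j) (α j * β i))
    (hα : ∀ x : K, ∃ i, aeval x (α i) ≠ 0) (hβ : ∀ x : K, ∃ i, aeval x (β i) ≠ 0) (i : ι) :
    (α i).degree = (β i).degree := by
  obtain ⟨i₀, hi₀⟩ := hβ 0
  have hβ₀ : β i₀ ≠ 0 := by rintro h; simp [h] at hi₀
  obtain ⟨b, a, c, hab, hcb, hca⟩ :=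
    UniqueFactorizationMonoid.exists_reduced_factors (β i₀) hβ₀ (α i₀)
  have hc : c ≠ 0 := by rintro rfl; simp [← hcb] at hβ₀
  have hcross (j : ι) : Associated (α j * b) (a * β j) := by
    refine Associated.of_mul_left (a := c) (c := c) ?_ (Associated.refl c) hc
    rw [mul_left_comm, hcb, ← mul_assoc, hca]
    exact hαβ j i₀
  have ha : IsUnit a := isUnit_of_dvd_of_forall_exists_aeval_ne_zero (K := K)
    (fun j => hab.symm.dvd_of_dvd_mul_right
      ((hcross j).dvd_iff_dvd_right.2 (dvd_mul_right a _))) hα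
  have hb : IsUnit b := isUnit_of_dvd_of_forall_exists_aeval_ne_zero (K := K)
    (fun j => hab.dvd_of_dvd_mul_left
      ((hcross j).symm.dvd_iff_dvd_right.2 (dvd_mul_left b _))) hβ
  exact degree_eq_degree_of_associated <| (associated_mul_unit_left _ _ hb).symm.trans
    ((hcross i).trans (associated_unit_mul_left _ _ ha))

end AlgClosed

theorem Function.Injective.exists_sumEquiv_comp_inl {a b ι : Type*} [Fintype a] [Fintype b]
    [Fintype ι] {J : a → ι} (hJ : Function.Injective J)
    (hcard : Fintype.card a + Fintype.card b = Fintype.card ι) :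
    ∃ e : a ⊕ b ≃ ι, ⇑e ∘ Sum.inl = J := by
  classical
  have hcompl : Fintype.card ((Set.range J)ᶜ : Set ι) = Fintype.card b := by
    rw [Fintype.card_compl_set, Set.card_range_of_injective hJ]; omega
  refine ⟨(Equiv.sumCongr (Equiv.ofInjective J hJ) (Fintype.equivOfCardEq hcompl).symm).trans
    (Equiv.Set.sumCompl _), ?_⟩
  ext i; simp

namespace Matrix

theorem mul_eq_zero_iff_range_mulVecLin_le_ker {R l m n : Type*} [CommSemiring R] [Fintype m]
    [Fintype n] (X : Matrix l m R) (Y : Matrix m n R) :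
    X * Y = 0 ↔ LinearMap.range Y.mulVecLin ≤ LinearMap.ker X.mulVecLin := by
  classical
  rw [LinearMap.range_le_ker_iff, ← mulVecLin_mul, ← toLin'_apply', LinearEquiv.map_eq_zero_iff]

theorem exists_injective_det_submatrix_ne_zero {K a ι : Type*} [Field K] [Fintype a]
    [DecidableEq a] [Fintype ι] (C : Matrix a ι K) (hC : C.rank = Fintype.card a) :
    ∃ J : a → ι, Function.Injective J ∧ (C.submatrix id J).det ≠ 0 := by
  obtain ⟨κ, s, hs, hspan, hli⟩ := exists_linearIndependent' K C.col
  have : Finite κ := Finite.of_injective s hs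
  have : Fintype κ := Fintype.ofFinite κ
  have hcard : Fintype.card κ = Fintype.card a := by
    rw [← finrank_span_eq_card hli, hspan, ← rank_eq_finrank_span_cols, hC]
  let φ : a ≃ κ := (Fintype.equivOfCardEq hcard).symm
  refine ⟨s ∘ φ, hs.comp φ.injective, ?_⟩
  rw [← isUnit_iff_ne_zero, ← isUnit_iff_isUnit_det, ← linearIndependent_cols_iff_isUnit]
  exact hli.comp φ φ.injective

section Leibniz

variable {R n : Type*} [CommRing R] [Fintype n] [DecidableEq n]

theorem natDegree_det_le_sum (A : Matrix n n R[X]) (d : n → ℕ)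
    (h : ∀ i j, (A i j).natDegree ≤ d i) : A.det.natDegree ≤ ∑ i, d i := by
  rw [det_apply']
  refine natDegree_sum_le_of_forall_le _ _ fun σ _ => natDegree_mul_le.trans ?_
  rw [natDegree_intCast, zero_add, ← Equiv.sum_comp σ d]
  exact (natDegree_prod_le _ _).trans (Finset.sum_le_sum fun i _ => h _ _)

theorem coeff_det_sum (A : Matrix n n R[X]) (d : n → ℕ) (h : ∀ i j, (A i j).natDegree ≤ d i) :
    A.det.coeff (∑ i, d i) = (of fun i j => (A i j).coeff (d i)).det := by
  simp only [det_apply', finsetSum_coeff, coeff_intCast_mul, of_apply]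
  refine Finset.sum_congr rfl fun σ _ => ?_
  rw [← Equiv.sum_comp σ d, coeff_prod_of_natDegree_le_sum _ _ _ fun i _ => h _ _]

end Leibniz

variable {R a b ι : Type*} [CommRing R] [Fintype a] [Fintype b] [Fintype ι]
  [DecidableEq a] [DecidableEq b] [DecidableEq ι]

/-- Both sides are `det (X * V)`, where `X` stacks `A` on the unit rows at `e ∘ Sum.inr` and `V`
puts the unit columns at `e' ∘ Sum.inl` beside `Bᵀ`. -/
theorem det_submatrix_inl_mul_det_submatrix_inr_of_mul_transpose_eq_zero
    (A : Matrix a ι R) (B : Matrix b ι R) (hAB : A * Bᵀ = 0) (e e' : a ⊕ b ≃ ι) :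
    (A.submatrix id (e' ∘ Sum.inl)).det * (B.submatrix id (e ∘ Sum.inr)).det =
      Equiv.Perm.sign (e.trans e'.symm) *
        ((A.submatrix id (e ∘ Sum.inl)).det * (B.submatrix id (e' ∘ Sum.inr)).det) := by
  set X : Matrix (a ⊕ b) ι R := fromRows A ((1 : Matrix ι ι R).submatrix (e ∘ Sum.inr) id)
  set V : Matrix ι (a ⊕ b) R := fromCols ((1 : Matrix ι ι R).submatrix id (e' ∘ Sum.inl)) Bᵀ
  have hXV : X * V = fromBlocks (A.submatrix id (e' ∘ Sum.inl)) 0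
      ((1 : Matrix ι ι R).submatrix (e ∘ Sum.inr) (e' ∘ Sum.inl))
      (B.submatrix id (e ∘ Sum.inr))ᵀ := by
    rw [fromRows_mul_fromCols, hAB]
    congr 1 <;> ext <;> simp [mul_apply, one_apply]
  have hX : X.submatrix id e =
      fromBlocks (A.submatrix id (e ∘ Sum.inl)) (A.submatrix id (e ∘ Sum.inr)) 0 1 := by
    ext (i | k) (j | l) <;> simp [X, one_apply]
  have hV : V.submatrix e' id =
      fromBlocks 1 (B.submatrix id (e' ∘ Sum.inl))ᵀ 0 (B.submatrix id (e' ∘ Sum.inr))ᵀ := by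
    ext (i | k) (j | l) <;> simp [V, one_apply]
  have hsplit : X * V = X.submatrix id e * (V.submatrix e' id).submatrix (e.trans e'.symm) id := by
    have he : ⇑e' ∘ ⇑(e.trans e'.symm) = ⇑e := by ext; simp
    rw [submatrix_submatrix, he, Function.id_comp, submatrix_mul_equiv, submatrix_id_id]
  have hdet := congrArg det hsplit
  rw [det_mul, det_permute, hX, hV, hXV, det_fromBlocks_zero₁₂, det_fromBlocks_zero₂₁,
    det_fromBlocks_zero₂₁, det_one, det_one, det_transpose, det_transpose] at hdet
  rw [hdet]
  ring

end Matrix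

section PolynomialMatrix

variable {p q m n : ℕ}

theorem natDegree_le_rowDegNat (A : Matrix (Fin p) (Fin m) F[X]) (i : Fin p) (j : Fin m) :
    (A i j).natDegree ≤ rowDegNat A i :=
  Finset.le_sup (f := fun j => (A i j).natDegree) (Finset.mem_univ j)

theorem rowDeg_le_rowDegNat (A : Matrix (Fin p) (Fin m) F[X]) (i : Fin p) :
    rowDeg A i ≤ rowDegNat A i :=
  Finset.sup_le fun j _ =>
    degree_le_natDegree.trans (WithBot.coe_le_coe.2 (natDegree_le_rowDegNat A i j))

theorem degree_det_submatrix_le_sum_rowDegNat (A : Matrix (Fin p) (Fin m) F[X])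
    (J : Fin p → Fin m) : (A.submatrix id J).det.degree ≤ ↑(∑ i, rowDegNat A i) :=
  degree_le_of_natDegree_le <|
    natDegree_det_le_sum _ _ fun i j => natDegree_le_rowDegNat A i (J j)

theorem RowReduced.exists_degree_det_submatrix_eq {A : Matrix (Fin p) (Fin m) F[X]}
    (hA : RowReduced A) : ∃ J : Fin p → Fin m, Function.Injective J ∧
      (A.submatrix id J).det.degree = ↑(∑ i, rowDegNat A i) := by
  obtain ⟨J, hJ, hdet⟩ := exists_injective_det_submatrix_ne_zero (hrMatrix A) (by rwa [Fintype.card_fin])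
  refine ⟨J, hJ, (degree_det_submatrix_le_sum_rowDegNat A J).antisymm (le_degree_of_ne_zero ?_)⟩
  rwa [coeff_det_sum (A.submatrix id J) (rowDegNat A) fun i j => natDegree_le_rowDegNat A i (J j)]

theorem RowReduced.rowDeg_eq {A : Matrix (Fin p) (Fin m) F[X]} (hA : RowReduced A)
    (i : Fin p) : rowDeg A i = rowDegNat A i := by
  obtain ⟨J, -, hdet⟩ := exists_injective_det_submatrix_ne_zero (hrMatrix A) (by rwa [Fintype.card_fin])
  obtain ⟨j, hj⟩ : ∃ j, hrMatrix A i (J j) ≠ 0 := by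
    by_contra! h
    exact hdet (det_eq_zero_of_row_eq_zero i h)
  exact (rowDeg_le_rowDegNat A i).antisymm ((le_degree_of_ne_zero hj).trans
    (Finset.le_sup (f := fun j => (A i j).degree) (Finset.mem_univ _)))

theorem RowReduced.sum_rowDeg_eq {A : Matrix (Fin p) (Fin m) F[X]} (hA : RowReduced A) :
    ∑ i, rowDeg A i = ↑(∑ i, rowDegNat A i) := by
  rw [Nat.cast_sum]
  exact Finset.sum_congr rfl fun i _ => hA.rowDeg_eq i

theorem IsMinimalColBasis.transpose {A : Matrix (Fin m) (Fin p) F[X]}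
    (hA : IsMinimalColBasis A) : IsMinimalRowBasis Aᵀ :=
  ⟨fun x => (rank_transpose (evalMat A x)).trans (hA.1 x), (rank_transpose _).trans hA.2⟩

theorem exists_injective_aeval_det_submatrix_ne_zero (A : Matrix (Fin p) (Fin m) F[X])
    {x : AlgebraicClosure F} (hx : (evalMat A x).rank = p) :
    ∃ J : Fin p → Fin m, Function.Injective J ∧ aeval x (A.submatrix id J).det ≠ 0 := by
  obtain ⟨J, hJ, hdet⟩ := exists_injective_det_submatrix_ne_zero (evalMat A x) (by simpa using hx)
  exact ⟨J, hJ, by rwa [AlgHom.map_det]⟩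

theorem sum_rowDegNat_le_of_mul_transpose_eq_zero {A : Matrix (Fin p) (Fin m) F[X]}
    {B : Matrix (Fin q) (Fin m) F[X]} (hpq : p + q = m) (hAB : A * Bᵀ = 0)
    (hA : IsMinimalRowBasis A) (hB : ∀ x, (evalMat B x).rank = q) :
    ∑ i, rowDegNat A i ≤ ∑ k, rowDegNat B k := by
  have hcard : Fintype.card (Fin p) + Fintype.card (Fin q) = Fintype.card (Fin m) := by simpa
  have hminor : ∀ e : Fin p ⊕ Fin q ≃ Fin m,
      (A.submatrix id (e ∘ Sum.inl)).det.degree = (B.submatrix id (e ∘ Sum.inr)).det.degree := by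
    refine degree_eq_degree_of_associated_mul_mul (K := AlgebraicClosure F)
      (fun e e' => ?_) (fun x => ?_) (fun x => ?_)
    · rw [det_submatrix_inl_mul_det_submatrix_inr_of_mul_transpose_eq_zero A B hAB e' e]
      exact associated_unit_mul_left _ _ ((Equiv.Perm.sign _).isUnit.map (Int.castRingHom _))
    · obtain ⟨J, hJ, hx⟩ := exists_injective_aeval_det_submatrix_ne_zero A (hA.1 x)
      obtain ⟨e, rfl⟩ := hJ.exists_sumEquiv_comp_inl hcard
      exact ⟨e, hx⟩
    · obtain ⟨J, hJ, hx⟩ := exists_injective_aeval_det_submatrix_ne_zero B (hB x)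
      obtain ⟨e, rfl⟩ := hJ.exists_sumEquiv_comp_inl (b := Fin p) (by simpa [add_comm] using hcard)
      exact ⟨(Equiv.sumComm _ _).trans e, hx⟩
  obtain ⟨J, hJ, hdeg⟩ := hA.2.exists_degree_det_submatrix_eq
  obtain ⟨e, rfl⟩ := hJ.exists_sumEquiv_comp_inl hcard
  have := degree_det_submatrix_le_sum_rowDegNat B (e ∘ Sum.inr)
  rw [← hminor, hdeg] at this
  exact_mod_cast this

theorem sum_rowDegNat_eq_of_mul_transpose_eq_zero {A : Matrix (Fin p) (Fin m) F[X]}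
    {B : Matrix (Fin q) (Fin m) F[X]} (hpq : p + q = m) (hAB : A * Bᵀ = 0)
    (hA : IsMinimalRowBasis A) (hB : IsMinimalRowBasis B) :
    ∑ i, rowDegNat A i = ∑ k, rowDegNat B k :=
  (sum_rowDegNat_le_of_mul_transpose_eq_zero hpq hAB hA hB.1).antisymm
    (sum_rowDegNat_le_of_mul_transpose_eq_zero (by omega)
      (by simpa using congrArg transpose hAB) hB hA.1)

theorem mul_eq_zero_of_rowSpace_le_leftNull {P : Matrix (Fin m) (Fin n) F[X]}
    {M : Matrix (Fin p) (Fin m) F[X]} {L : Matrix (Fin m) (Fin q) F[X]}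
    (hM : rowSpace M ≤ leftNull P) (hL : colSpace L ≤ colSpace P) : M * L = 0 := by
  have hMP : colSpace P ≤ LinearMap.ker (toRat M).mulVecLin := by
    rw [colSpace, ← mul_eq_zero_iff_range_mulVecLin_le_ker, ← transpose_eq_zero, transpose_mul]
    exact (mul_eq_zero_iff_range_mulVecLin_le_ker _ _).2 hM
  apply map_injective (RatFunc.algebraMap_injective F)
  dsimp only
  rw [Matrix.map_mul, Matrix.map_zero _ (map_zero _)]
  exact (mul_eq_zero_iff_range_mulVecLin_le_ker _ _).2 (hL.trans hMP)

end PolynomialMatrix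

theorem sum_minimal_indices_eq_general
    {F : Type*} [Field F] {m n r : ℕ}
    (P : Matrix (Fin m) (Fin n) F[X])
    (hrm : r ≤ m) (hrn : r ≤ n)
    (M : Matrix (Fin (m - r)) (Fin m) F[X])
    (hM : IsMinimalRowBasis M) (hMspan : rowSpace M = leftNull P)
    (L : Matrix (Fin m) (Fin r) F[X])
    (hL : IsMinimalColBasis L) (hLspan : colSpace L = colSpace P)
    (N : Matrix (Fin n) (Fin (n - r)) F[X])
    (hN : IsMinimalColBasis N) (hNspan : colSpace N = rightNull P)
    (R : Matrix (Fin r) (Fin n) F[X])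
    (hR : IsMinimalRowBasis R) (hRspan : rowSpace R = rowSpace P) :
    (∑ i, rowDeg M i) = (∑ j, colDeg L j) ∧
    (∑ j, colDeg N j) = (∑ i, rowDeg R i) := by
  have hML : M * L = 0 := mul_eq_zero_of_rowSpace_le_leftNull hMspan.le hLspan.le
  -- `Nᵀ, Rᵀ, Pᵀ` have the row and column spaces of `N, R, P` exchanged, definitionally.
  have hRN : Nᵀ * Rᵀ = 0 := mul_eq_zero_of_rowSpace_le_leftNull (P := Pᵀ) hNspan.le hRspan.le
  constructor
  · calc ∑ i, rowDeg M i = ↑(∑ i, rowDegNat M i) := hM.2.sum_rowDeg_eq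
      _ = ↑(∑ j, rowDegNat Lᵀ j) := by
        rw [sum_rowDegNat_eq_of_mul_transpose_eq_zero (by omega) (by simpa using hML) hM
          hL.transpose]
      _ = ∑ j, colDeg L j := hL.transpose.2.sum_rowDeg_eq.symm
  · calc ∑ j, colDeg N j = ↑(∑ j, rowDegNat Nᵀ j) := hN.transpose.2.sum_rowDeg_eq
      _ = ↑(∑ i, rowDegNat R i) := by
        rw [sum_rowDegNat_eq_of_mul_transpose_eq_zero (by omega) (by simpa using hRN)
          hN.transpose hR]
      _ = ∑ i, rowDeg R i := hR.2.sum_rowDeg_eq.symm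

/-- The sum of the minimal indices of the left nullspace of P equals the sum of the minimal
indices of the column space of P, and the sum of the minimal indices of the right nullspace
equals the sum of the minimal indices of the row space (Corollary on dual minimal bases). -/
theorem sum_minimal_indices_eq
    {F : Type*} [Field F] {m n r : ℕ}
    (P : Matrix (Fin m) (Fin n) F[X])
    (hrank : normalRank P = r) (hr0 : 0 < r) (hrm : r ≤ m) (hrn : r ≤ n)
    (M : Matrix (Fin (m - r)) (Fin m) F[X])
    (hM : IsMinimalRowBasis M) (hMspan : rowSpace M = leftNull P)
    (L : Matrix (Fin m) (Fin r) F[X])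
    (hL : IsMinimalColBasis L) (hLspan : colSpace L = colSpace P)
    (N : Matrix (Fin n) (Fin (n - r)) F[X])
    (hN : IsMinimalColBasis N) (hNspan : colSpace N = rightNull P)
    (R : Matrix (Fin r) (Fin n) F[X])
    (hR : IsMinimalRowBasis R) (hRspan : rowSpace R = rowSpace P) :
    (∑ i, rowDeg M i) = (∑ j, colDeg L j) ∧
    (∑ j, colDeg N j) = (∑ i, rowDeg R i) :=
  sum_minimal_indices_eq_general P hrm hrn M hM hMspan L hL hLspan N hN hNspan R hR hRspan
end
end

section
/- Let F be a field with algebraic closure F̄. (i) If L ∈ F[λ]^{m×r} is such that the constant matrix L(λ₀) has full column rank r for all λ₀ ∈ F̄, then L can be factorized as L = L_c V, where L_c ∈ F[λ]^{m×r} is column reduced and L_c(λ₀) has full column rank r for all λ₀ ∈ F̄ (so the columns of L_c form a minimal basis of Col(L)), and V ∈ F[λ]^{r×r} is unimodular; hence the column degrees of L_c are the minimal indices of Col(L). (ii) If R ∈ F[λ]^{r×n} is such that R(λ₀) has full row rank r for all λ₀ ∈ F̄, then R can be factorized as R = U R_r, where R_r ∈ F[λ]^{r×n} is row reduced and R_r(λ₀)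 has full row rank r for all λ₀ ∈ F̄ (so the rows of R_r form a minimal basis of Row(R)), and U ∈ F[λ]^{r×r} is unimodular; hence the row degrees of R_r are the minimal indices of Row(R). -/
open Polynomial Matrix

noncomputable section

variable {F : Type*} [Field F]

/-!
Full rank at every point of the algebraic closure forces full column rank over `F(λ)`: after
clearing denominators, a kernel vector would be a nonzero polynomial vector `w` with `L w = 0`,
and evaluating at a point where some entry of `w` does not vanish contradicts pointwise rank.

If `L` has full normal column rank but is not column reduced, take `v ≠ 0` with
`hcMatrix L * v = 0` and, among the columns in the support of `v`, one column `j` of largest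
degree `d j`. The column operation `col j ← ∑ k, v k λ^(d j - d k) col k`, of determinant
`v j`, cancels the coefficients of degree `d j` in column `j` and leaves the other columns
alone, so the sum of the column degrees drops; the new column `j` is nonzero since the normal
rank is unchanged. Induction on that sum yields `L = Lc V` with `Lc` column reduced and `V`
unimodular, and unimodular factors preserve both the pointwise ranks and the column space.
Part (ii) is part (i) for `Rᵀ`.
-/

namespace Matrix

variable {K : Type*} [Field K] {ι : Type*} {n : ℕ}

theorem rank_eq_iff_linearIndependent_col (A : Matrix ι (Fin n) K) :
    A.rank = n ↔ LinearIndependent K A.col := by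
  rw [rank_eq_finrank_span_cols, linearIndependent_iff_card_eq_finrank_span, Fintype.card_fin,
    eq_comm]
  rfl

theorem rank_eq_iff_mulVec_injective (A : Matrix ι (Fin n) K) :
    A.rank = n ↔ Function.Injective A.mulVec := by
  rw [rank_eq_iff_linearIndependent_col, mulVec_injective_iff]

theorem exists_mulVec_eq_zero_of_rank_ne {A : Matrix ι (Fin n) K} (h : A.rank ≠ n) :
    ∃ v ≠ 0, A *ᵥ v = 0 := by
  by_contra! hA
  refine h ((rank_eq_iff_mulVec_injective A).2 ?_)
  exact (injective_iff_map_eq_zero A.mulVecLin).2 fun v => not_imp_not.1 (hA v)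

theorem isUnit_det_map {R S κ : Type*} [CommRing R] [CommRing S] [Fintype κ] [DecidableEq κ]
    (f : R →+* S) {V : Matrix κ κ R} (hV : IsUnit V.det) : IsUnit (V.map f).det := by
  rw [← RingHom.mapMatrix_apply, ← RingHom.map_det]
  exact hV.map f

theorem rank_map_mul_of_isUnit_det {R κ : Type*} [CommRing R] [Fintype κ] [DecidableEq κ]
    (f : R →+* K) (A : Matrix ι κ R) {V : Matrix κ κ R} (hV : IsUnit V.det) :
    ((A * V).map f).rank = (A.map f).rank := by
  rw [Matrix.map_mul, rank_mul_eq_left_of_isUnit_det _ _ (isUnit_det_map f hV)]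

theorem det_one_updateCol {R κ : Type*} [CommRing R] [Fintype κ] [DecidableEq κ] (j : κ)
    (w : κ → R) : ((1 : Matrix κ κ R).updateCol j w).det = w j := by
  rw [← cramer_apply, cramer_one]
  rfl

theorem mulVec_injective_map_algebraMap {R L κ : Type*} [CommRing R] [Field L]
    [Algebra R L] [IsFractionRing R L] [Fintype κ] {A : Matrix ι κ R}
    (hA : Function.Injective A.mulVec) :
    Function.Injective (A.map (algebraMap R L)).mulVec := by
  rw [mulVec_injective_iff] at hA ⊢
  rw [← LinearIndependent.iff_fractionRing R L]
  have hker : LinearMap.ker ((Algebra.linearMap R L).compLeft ι) = ⊥ :=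
    LinearMap.ker_eq_bot.2 (IsFractionRing.injective R L).comp_left
  exact hA.map' _ hker

end Matrix

theorem Polynomial.exists_aeval_ne_zero {K : Type*} [Field K] [Algebra F K] [Infinite K]
    {p : F[X]} (hp : p ≠ 0) : ∃ x : K, aeval x p ≠ 0 := by
  by_contra! h
  refine hp ((Polynomial.map_eq_zero_iff (algebraMap F K).injective).1 ?_)
  exact Polynomial.zero_of_eval_zero _ fun x => by rw [eval_map_algebraMap, h x]

section PolynomialMatrix

variable {m n : ℕ}

theorem evalMat_eq_map (P : Matrix (Fin m) (Fin n) F[X]) (x : AlgebraicClosure F) :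
    evalMat P x = P.map (aeval x) :=
  rfl

theorem toRat_mul {k : ℕ} (A : Matrix (Fin m) (Fin k) F[X]) (B : Matrix (Fin k) (Fin n) F[X]) :
    toRat (A * B) = toRat A * toRat B :=
  Matrix.map_mul

theorem rank_evalMat_mul_of_isUnit_det (P : Matrix (Fin m) (Fin n) F[X])
    {V : Matrix (Fin n) (Fin n) F[X]} (hV : IsUnit V.det) (x : AlgebraicClosure F) :
    (evalMat (P * V) x).rank = (evalMat P x).rank := by
  simpa only [evalMat_eq_map, AlgHom.toRingHom_eq_coe, AlgHom.coe_toRingHom] using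
    rank_map_mul_of_isUnit_det (aeval x).toRingHom P hV

theorem colSpace_mul_of_isUnit_det (P : Matrix (Fin m) (Fin n) F[X])
    {V : Matrix (Fin n) (Fin n) F[X]} (hV : IsUnit V.det) : colSpace (P * V) = colSpace P := by
  have hsurj : LinearMap.range (toRat V).mulVecLin = ⊤ := LinearMap.range_eq_top.2 <|
    mulVec_surjective_iff_isUnit.2 ((isUnit_iff_isUnit_det _).2 (isUnit_det_map _ hV))
  rw [colSpace, colSpace, toRat_mul, mulVecLin_mul, LinearMap.range_comp_of_range_eq_top _ hsurj]

theorem rowSpace_transpose (P : Matrix (Fin m) (Fin n) F[X]) : rowSpace Pᵀ = colSpace P :=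
  rfl

theorem mulVec_injective_of_forall_evalMat {P : Matrix (Fin m) (Fin n) F[X]}
    (h : ∀ x, Function.Injective (evalMat P x).mulVec) : Function.Injective P.mulVec := by
  refine (injective_iff_map_eq_zero P.mulVecLin).2 fun w hw => ?_
  by_contra hw0
  obtain ⟨j, hj⟩ := Function.ne_iff.1 hw0
  obtain ⟨x, hx⟩ := Polynomial.exists_aeval_ne_zero (K := AlgebraicClosure F) hj
  have hwx : evalMat P x *ᵥ (aeval x ∘ w) = 0 := by
    ext i
    simpa [evalMat_eq_map, show P *ᵥ w = 0 from hw] using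
      (RingHom.map_mulVec (aeval x).toRingHom P w i).symm
  exact hx (congrFun (h x (hwx.trans (mulVec_zero _).symm)) j)

theorem rank_toRat_of_forall_rank_evalMat {P : Matrix (Fin m) (Fin n) F[X]}
    (h : ∀ x, (evalMat P x).rank = n) : (toRat P).rank = n := by
  refine (rank_eq_iff_mulVec_injective _).2 (mulVec_injective_map_algebraMap ?_)
  exact mulVec_injective_of_forall_evalMat fun x => (rank_eq_iff_mulVec_injective _).1 (h x)

end PolynomialMatrix

section ColumnReduction

variable {m r : ℕ}

theorem natDegree_le_colDegNat (P : Matrix (Fin m) (Fin r) F[X]) (i : Fin m) (k : Fin r) :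
    (P i k).natDegree ≤ colDegNat P k :=
  Finset.le_sup (f := fun i => (P i k).natDegree) (Finset.mem_univ i)

theorem colDegNat_updateCol_of_ne (P : Matrix (Fin m) (Fin r) F[X])
    {j k : Fin r} (hk : k ≠ j) (c : Fin m → F[X]) :
    colDegNat (P.updateCol j c) k = colDegNat P k :=
  Finset.sup_congr rfl fun i _ => by rw [updateCol_ne hk]

theorem colDegNat_lt_of_degree_lt {P : Matrix (Fin m) (Fin r) F[X]} {j : Fin r} {D : ℕ}
    (hlt : ∀ i, (P i j).degree < D) (hne : ∃ i, P i j ≠ 0) : colDegNat P j < D := by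
  obtain ⟨i₀, hi₀⟩ := hne
  have hD : 0 < D := by exact_mod_cast (zero_le_degree_iff.2 hi₀).trans_lt (hlt i₀)
  refine (Finset.sup_lt_iff hD).2 fun i _ => ?_
  by_cases hi : P i j = 0
  · simpa [hi] using hD
  · exact (natDegree_lt_iff_degree_lt hi).2 (hlt i)

theorem degree_mulVec_lt_of_hcMatrix_mulVec_eq_zero {L : Matrix (Fin m) (Fin r) F[X]}
    {v : Fin r → F} (hv : hcMatrix L *ᵥ v = 0) {j : Fin r}
    (hj : ∀ k, v k ≠ 0 → colDegNat L k ≤ colDegNat L j) (i : Fin m) :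
    ((L *ᵥ fun k => C (v k) * X ^ (colDegNat L j - colDegNat L k)) i).degree <
      colDegNat L j := by
  set d := colDegNat L
  refine (degree_lt_iff_coeff_zero _ _).2 fun n hn => ?_
  have hterm (t : Fin r) : (L i t * (C (v t) * X ^ (d j - d t))).coeff n =
      (L i t).coeff (n - (d j - d t)) * v t := by
    rw [← mul_assoc, coeff_mul_X_pow', if_pos (by omega), coeff_mul_C]
  simp only [mulVec, dotProduct, finsetSum_coeff, hterm]
  rcases hn.eq_or_lt with rfl | hlt
  · refine (Finset.sum_congr rfl fun t _ => ?_).trans (congrFun hv i)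
    by_cases hvt : v t = 0
    · simp [hvt]
    · rw [Nat.sub_sub_self (hj t hvt)]
      rfl
  · refine Finset.sum_eq_zero fun t _ => ?_
    by_cases hvt : v t = 0
    · simp [hvt]
    · have hdt := hj t hvt
      have hdeg : (L i t).natDegree < n - (d j - d t) :=
        (natDegree_le_colDegNat L i t).trans_lt (show d t < _ by omega)
      rw [coeff_eq_zero_of_natDegree_lt hdeg, zero_mul]

theorem exists_isUnit_det_sum_colDegNat_mul_lt {L : Matrix (Fin m) (Fin r) F[X]}
    (hL : (toRat L).rank = r) (hred : ¬ ColReduced L) :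
    ∃ E : Matrix (Fin r) (Fin r) F[X], IsUnit E.det ∧
      ∑ k, colDegNat (L * E) k < ∑ k, colDegNat L k := by
  classical
  obtain ⟨v, hv0, hv⟩ := exists_mulVec_eq_zero_of_rank_ne hred
  have hsupp : (Finset.univ.filter fun k => v k ≠ 0).Nonempty := by
    obtain ⟨k, hk⟩ := Function.ne_iff.1 hv0
    exact ⟨k, by simpa using hk⟩
  obtain ⟨j, hjv, hjmax⟩ := Finset.exists_max_image _ (colDegNat L) hsupp
  have hvj : v j ≠ 0 := by simpa using hjv
  set w : Fin r → F[X] := fun k => C (v k) * X ^ (colDegNat L j - colDegNat L k)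
  set E := (1 : Matrix (Fin r) (Fin r) F[X]).updateCol j w
  have hE : IsUnit E.det := by
    simpa [E, det_one_updateCol, w] using isUnit_C.2 (Ne.isUnit hvj)
  have hLE : L * E = L.updateCol j (L *ᵥ w) := by rw [mul_updateCol, Matrix.mul_one]
  have hcol : ∃ i, (L * E) i j ≠ 0 := by
    have hrank : (toRat (L * E)).rank = r := (rank_map_mul_of_isUnit_det _ L hE).trans hL
    obtain ⟨i, hi⟩ :=
      Function.ne_iff.1 (((rank_eq_iff_linearIndependent_col _).1 hrank).ne_zero j)
    refine ⟨i, fun h => hi ?_⟩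
    show algebraMap F[X] (RatFunc F) ((L * E) i j) = 0
    rw [h, map_zero]
  have hj : colDegNat (L * E) j < colDegNat L j := by
    refine colDegNat_lt_of_degree_lt (fun i => ?_) hcol
    simpa [hLE] using degree_mulVec_lt_of_hcMatrix_mulVec_eq_zero hv
      (fun k hk => hjmax k (by simpa using hk)) i
  have hle (k : Fin r) : colDegNat (L * E) k ≤ colDegNat L k := by
    rcases eq_or_ne k j with rfl | hk
    · exact hj.le
    · rw [hLE, colDegNat_updateCol_of_ne L hk]
  exact ⟨E, hE, Finset.sum_lt_sum (fun k _ => hle k) ⟨j, Finset.mem_univ j, hj⟩⟩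

theorem exists_colReduced_mul_unimodular (L : Matrix (Fin m) (Fin r) F[X])
    (hL : (toRat L).rank = r) :
    ∃ (Lc : Matrix (Fin m) (Fin r) F[X]) (V : Matrix (Fin r) (Fin r) F[X]),
      L = Lc * V ∧ ColReduced Lc ∧ IsUnit V.det := by
  induction hN : ∑ k, colDegNat L k using Nat.strong_induction_on generalizing L with
  | _ N ih =>
  by_cases hred : ColReduced L
  · exact ⟨L, 1, (Matrix.mul_one L).symm, hred, by simp⟩
  obtain ⟨E, hE, hlt⟩ := exists_isUnit_det_sum_colDegNat_mul_lt hL hred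
  obtain ⟨Lc, V, hfac, hLc, hV⟩ := ih _ (hN ▸ hlt) (L * E)
    ((rank_map_mul_of_isUnit_det _ L hE).trans hL) rfl
  refine ⟨Lc, V * E⁻¹, ?_, hLc, ?_⟩
  · rw [← Matrix.mul_assoc, ← hfac, mul_nonsing_inv_cancel_right _ _ hE]
  · rw [det_mul]
    exact hV.mul (isUnit_nonsing_inv_det _ hE)

end ColumnReduction

section MinimalBasis

variable {m n : ℕ}

theorem isMinimalRowBasis_transpose_iff (P : Matrix (Fin m) (Fin n) F[X]) :
    IsMinimalRowBasis Pᵀ ↔ IsMinimalColBasis P := by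
  have hrank (x : AlgebraicClosure F) : (evalMat Pᵀ x).rank = (evalMat P x).rank :=
    rank_transpose (evalMat P x)
  have hred : (hrMatrix Pᵀ).rank = (hcMatrix P).rank := rank_transpose (hcMatrix P)
  simp only [IsMinimalRowBasis, IsMinimalColBasis, RowReduced, ColReduced, hrank, hred]

theorem exists_isMinimalColBasis_mul_unimodular (L : Matrix (Fin m) (Fin n) F[X])
    (hL : ∀ x : AlgebraicClosure F, (evalMat L x).rank = n) :
    ∃ (Lc : Matrix (Fin m) (Fin n) F[X]) (V : Matrix (Fin n) (Fin n) F[X]),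
      L = Lc * V ∧ IsMinimalColBasis Lc ∧ colSpace Lc = colSpace L ∧ IsUnit V.det := by
  obtain ⟨Lc, V, rfl, hLc, hV⟩ :=
    exists_colReduced_mul_unimodular L (rank_toRat_of_forall_rank_evalMat hL)
  refine ⟨Lc, V, rfl, ⟨fun x => ?_, hLc⟩, (colSpace_mul_of_isUnit_det Lc hV).symm, hV⟩
  rw [← rank_evalMat_mul_of_isUnit_det Lc hV, hL x]

theorem exists_unimodular_mul_isMinimalRowBasis (R : Matrix (Fin m) (Fin n) F[X])
    (hR : ∀ x : AlgebraicClosure F, (evalMat R x).rank = m) :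
    ∃ (U : Matrix (Fin m) (Fin m) F[X]) (Rr : Matrix (Fin m) (Fin n) F[X]),
      R = U * Rr ∧ IsMinimalRowBasis Rr ∧ rowSpace Rr = rowSpace R ∧ IsUnit U.det := by
  obtain ⟨Lc, V, hfac, hLc, hspace, hV⟩ := exists_isMinimalColBasis_mul_unimodular Rᵀ
    fun x => (rank_transpose (evalMat R x)).trans (hR x)
  refine ⟨Vᵀ, Lcᵀ, ?_, (isMinimalRowBasis_transpose_iff Lc).2 hLc, ?_, ?_⟩
  · rw [← transpose_mul, ← hfac, transpose_transpose]
  · rw [rowSpace_transpose, hspace, ← rowSpace_transpose, transpose_transpose]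
  · rwa [det_transpose]

end MinimalBasis

/-- A polynomial matrix with full column (resp. row) rank at every point of the algebraic
closure factors as a minimal basis times (resp. a unimodular matrix times) a unimodular
matrix; in F[X] unimodular means the determinant is a unit, i.e. a nonzero constant. -/
theorem minimal_basis_unimodular_factorization
    {F : Type*} [Field F] :
    (∀ (m r : ℕ) (L : Matrix (Fin m) (Fin r) F[X]),
      (∀ x : AlgebraicClosure F, (evalMat L x).rank = r) →
      ∃ (Lc : Matrix (Fin m) (Fin r) F[X]) (V : Matrix (Fin r) (Fin r) F[X]),
        L = Lc * V ∧ IsMinimalColBasis Lc ∧ colSpace Lc = colSpace L ∧ IsUnit V.det) ∧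
    (∀ (r n : ℕ) (R : Matrix (Fin r) (Fin n) F[X]),
      (∀ x : AlgebraicClosure F, (evalMat R x).rank = r) →
      ∃ (U : Matrix (Fin r) (Fin r) F[X]) (Rr : Matrix (Fin r) (Fin n) F[X]),
        R = U * Rr ∧ IsMinimalRowBasis Rr ∧ rowSpace Rr = rowSpace R ∧ IsUnit U.det) :=
  ⟨fun _ _ => exists_isMinimalColBasis_mul_unimodular,
    fun _ _ => exists_unimodular_mul_isMinimalRowBasis⟩
end
end

section
/- (Predictable-degree property for products of two polynomial matrices.) Let F be a field and P = L R, where L ∈ F[λ]^{m×r} and R ∈ F[λ]^{r×n}. If L is column reduced or R is row reduced, then deg(P) = max_{1 ≤ i ≤ r} ( deg(L_{*i}) + deg(R_{i*}) ), with the convention that the degree of a zero column or row is −∞ and −∞ is absorbing under addition. -/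
/-!
Each entry `L j i * R i k` of a sum `(L * R) j k` has degree at most `deg L_{*i} + deg R_{i*}`,
which gives `≤`. For `≥`, let `d` be the maximum and `S` the set of indices `i` attaining it:
the coefficient of `λ^d` in `L * R` is `L_hc * D_S * R_hr`, with `D_S` the diagonal projection
onto `S`. For `i ∈ S` both the column `i` of `L_hc` and the row `i` of `R_hr` are nonzero, so
`L_hc * D_S * R_hr ≠ 0` as soon as `L_hc` is injective or `R_hr` is surjective.
-/


open Polynomial Matrix

noncomputable section

variable {F : Type*} [Field F]

lemma Finset.exists_mem_eq_sup_of_ne_bot {α ι : Type*} [LinearOrder α] [OrderBot α]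
    {s : Finset ι} {f : ι → α} (h : s.sup f ≠ ⊥) : ∃ i ∈ s, s.sup f = f i :=
  s.exists_mem_eq_sup (Finset.nonempty_iff_ne_empty.2 (by rintro rfl; exact h Finset.sup_empty)) f

lemma Matrix.mulVec_injective_of_rank_eq_card {ι m K : Type*} [Fintype ι] [Fintype m] [Field K]
    {A : Matrix m ι K} (hA : A.rank = Fintype.card ι) : Function.Injective A.mulVec := by
  rw [Matrix.mulVec_injective_iff, linearIndependent_iff_card_eq_finrank_span, ← hA,
    A.rank_eq_finrank_span_cols, Set.finrank]

lemma Matrix.exists_sum_mul_ne_zero_of_rank_eq_card {ι m n K : Type*} [Fintype ι] [Fintype m]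
    [Field K] {A : Matrix m ι K} (hA : A.rank = Fintype.card ι) (B : Matrix ι n K)
    {S : Finset ι} {i₀ : ι} (hi₀ : i₀ ∈ S) {k : n} (hk : B i₀ k ≠ 0) :
    ∃ j, ∑ i ∈ S, A j i * B i k ≠ 0 := by
  classical
  by_contra! hzero
  have hv : A *ᵥ (fun i => if i ∈ S then B i k else 0) = A *ᵥ 0 := by
    ext j
    simpa [Matrix.mulVec, dotProduct, Finset.sum_ite_mem] using hzero j
  exact hk (by simpa [hi₀] using congrFun (Matrix.mulVec_injective_of_rank_eq_card hA hv) i₀)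

lemma Matrix.exists_sum_mul_ne_zero {ι m n K : Type*} [Fintype ι] [Fintype m] [Fintype n]
    [Field K] {A : Matrix m ι K} {B : Matrix ι n K}
    (hAB : A.rank = Fintype.card ι ∨ B.rank = Fintype.card ι)
    {S : Finset ι} {i₀ : ι} (hi₀ : i₀ ∈ S) (hA : ∃ j, A j i₀ ≠ 0) (hB : ∃ k, B i₀ k ≠ 0) :
    ∃ j k, ∑ i ∈ S, A j i * B i k ≠ 0 := by
  obtain ⟨j, hj⟩ := hA
  obtain ⟨k, hk⟩ := hB
  rcases hAB with hA | hB
  · obtain ⟨j', hj'⟩ := exists_sum_mul_ne_zero_of_rank_eq_card hA B hi₀ hk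
    exact ⟨j', k, hj'⟩
  · obtain ⟨k', hk'⟩ := exists_sum_mul_ne_zero_of_rank_eq_card (A := Bᵀ)
      (by rwa [rank_transpose]) Aᵀ hi₀ (k := j) hj
    exact ⟨j, k', by simpa only [transpose_apply, mul_comm] using hk'⟩

section DegreeLemmas

variable {m n : ℕ} (P : Matrix (Fin m) (Fin n) F[X])

lemma degree_le_colDeg (i : Fin m) (j : Fin n) : (P i j).degree ≤ colDeg P j :=
  Finset.le_sup (f := fun i => (P i j).degree) (Finset.mem_univ i)

lemma degree_le_rowDeg (i : Fin m) (j : Fin n) : (P i j).degree ≤ rowDeg P i :=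
  Finset.le_sup (f := fun j => (P i j).degree) (Finset.mem_univ j)

lemma degree_le_matDeg (i : Fin m) (j : Fin n) : (P i j).degree ≤ matDeg P :=
  (degree_le_rowDeg P i j).trans (Finset.le_sup (f := rowDeg P) (Finset.mem_univ i))

lemma colDegNat_eq_unbotD (j : Fin n) : colDegNat P j = (colDeg P j).unbotD 0 := by
  have hmono : Monotone (WithBot.unbotD (0 : ℕ)) := by
    intro a b hab
    cases a with
    | bot => exact Nat.zero_le _
    | coe a => exact WithBot.unbotD_mono WithBot.coe_ne_bot hab
  rw [colDeg, Finset.apply_sup_eq_sup_comp_of_linearOrder _ hmono rfl]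
  rfl

lemma rowDegNat_eq_unbotD (i : Fin m) : rowDegNat P i = (rowDeg P i).unbotD 0 :=
  colDegNat_eq_unbotD Pᵀ i

lemma exists_hcMatrix_ne_zero {j : Fin n} (h : colDeg P j ≠ ⊥) : ∃ i, hcMatrix P i j ≠ 0 := by
  obtain ⟨i, -, hi⟩ := Finset.exists_mem_eq_sup_of_ne_bot h
  have hPij : P i j ≠ 0 := degree_ne_bot.mp (hi ▸ h)
  refine ⟨i, ?_⟩
  rw [hcMatrix, of_apply, colDegNat_eq_unbotD, colDeg, hi]
  exact leadingCoeff_ne_zero.mpr hPij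

lemma exists_hrMatrix_ne_zero {i : Fin m} (h : rowDeg P i ≠ ⊥) : ∃ j, hrMatrix P i j ≠ 0 :=
  exists_hcMatrix_ne_zero Pᵀ h

end DegreeLemmas

section Product

variable {m r n : ℕ} (L : Matrix (Fin m) (Fin r) F[X]) (R : Matrix (Fin r) (Fin n) F[X])

lemma degree_mul_le_colDeg_add_rowDeg (j : Fin m) (i : Fin r) (k : Fin n) :
    (L j i * R i k).degree ≤ colDeg L i + rowDeg R i :=
  (degree_mul_le _ _).trans (add_le_add (degree_le_colDeg L j i) (degree_le_rowDeg R i k))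

lemma matDeg_mul_le :
    matDeg (L * R) ≤ Finset.univ.sup (fun i : Fin r => colDeg L i + rowDeg R i) := by
  refine Finset.sup_le fun j _ => Finset.sup_le fun k _ => ?_
  rw [mul_apply]
  exact (degree_sum_le _ _).trans <| Finset.sup_le fun i _ =>
    (degree_mul_le_colDeg_add_rowDeg L R j i k).trans
      (Finset.le_sup (f := fun i => colDeg L i + rowDeg R i) (Finset.mem_univ i))

lemma coeff_mul_eq_hcMatrix_mul_hrMatrix {j : Fin m} {i : Fin r} {k : Fin n} {d : ℕ}
    (h : colDeg L i + rowDeg R i = d) :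
    (L j i * R i k).coeff d = hcMatrix L j i * hrMatrix R i k := by
  obtain ⟨c, e, hc, he, rfl⟩ := WithBot.add_eq_coe.mp h
  have hLnat : colDegNat L i = c := by rw [colDegNat_eq_unbotD, ← hc]; rfl
  have hRnat : rowDegNat R i = e := by rw [rowDegNat_eq_unbotD, ← he]; rfl
  rw [coeff_mul_add_eq_of_natDegree_le
    (natDegree_le_of_degree_le ((degree_le_colDeg L j i).trans hc.ge))
    (natDegree_le_of_degree_le ((degree_le_rowDeg R i k).trans he.ge))]
  simp only [hcMatrix, hrMatrix, of_apply, hLnat, hRnat]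

lemma coeff_mul_apply_eq_sum {d : ℕ} (hd : ∀ i, colDeg L i + rowDeg R i ≤ d) (j : Fin m)
    (k : Fin n) :
    ((L * R) j k).coeff d = ∑ i ∈ Finset.univ.filter (fun i => colDeg L i + rowDeg R i = d),
      hcMatrix L j i * hrMatrix R i k := by
  rw [mul_apply, finsetSum_coeff, Finset.sum_filter]
  refine Finset.sum_congr rfl fun i _ => ?_
  split_ifs with h
  · exact coeff_mul_eq_hcMatrix_mul_hrMatrix L R h
  · exact coeff_eq_zero_of_degree_lt
      ((degree_mul_le_colDeg_add_rowDeg L R j i k).trans_lt (lt_of_le_of_ne (hd i) h))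

end Product

/-- Predictable-degree property for a product of two polynomial matrices: if L is column
reduced or R is row reduced, then deg(L R) = max over i of (deg L_{*i} + deg R_{i*}). -/
theorem predictable_degree_two_factors
    {F : Type*} [Field F] {m r n : ℕ}
    (L : Matrix (Fin m) (Fin r) F[X]) (R : Matrix (Fin r) (Fin n) F[X])
    (h : ColReduced L ∨ RowReduced R) :
    matDeg (L * R) = Finset.univ.sup (fun i : Fin r => colDeg L i + rowDeg R i) := by
  refine le_antisymm (matDeg_mul_le L R) ?_
  rcases eq_or_ne (Finset.univ.sup fun i : Fin r => colDeg L i + rowDeg R i) ⊥ with hbot | hbot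
  · exact hbot ▸ bot_le
  obtain ⟨i₀, -, hi₀⟩ := Finset.exists_mem_eq_sup_of_ne_bot hbot
  obtain ⟨d, hd⟩ := WithBot.ne_bot_iff_exists.mp hbot
  rw [← hd] at hi₀ ⊢
  obtain ⟨hL, hR⟩ := WithBot.add_ne_bot.mp (hi₀ ▸ WithBot.coe_ne_bot)
  obtain ⟨j, k, hjk⟩ := Matrix.exists_sum_mul_ne_zero
    (S := Finset.univ.filter fun i => colDeg L i + rowDeg R i = d)
    (by simpa only [ColReduced, RowReduced, Fintype.card_fin] using h)
    (Finset.mem_filter.mpr ⟨Finset.mem_univ i₀, hi₀.symm⟩)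
    (exists_hcMatrix_ne_zero L hL) (exists_hrMatrix_ne_zero R hR)
  rw [← coeff_mul_apply_eq_sum L R fun i => (Finset.le_sup (Finset.mem_univ i)).trans hd.ge]
    at hjk
  exact (le_degree_of_ne_zero hjk).trans (degree_le_matDeg _ j k)
end
end
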